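/- For every k ≥ 2 and all z₁,…,z_k ∈ ℂ∖ℝ, the divided difference of the semicircle Stieltjes transform satisfies |m[z₁,…,z_k]| ≤ η_*^{1−k} · max_i |Im m(z_i)|, where η_* := min_i |Im z_i|. -/

import Mathlib

open MeasureTheory ProbabilityTheory Finset
open scoped ENNReal Classical

noncomputable section

namespace Paper

/-- The normalized trace `⟨R⟩ = N⁻¹ Tr R`. -/
def ntr {N : ℕ} (R : Matrix (Fin N) (Fin N) ℂ) : ℂ := (N : ℂ)⁻¹ * R.trace

/-- The (ℓ²→ℓ²) operator norm of a matrix. -/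
def opNorm {N : ℕ} (A : Matrix (Fin N) (Fin N) ℂ) : ℝ :=
  ‖(Matrix.toEuclideanCLM (𝕜 := ℂ) A : EuclideanSpace ℂ (Fin N) →L[ℂ] EuclideanSpace ℂ (Fin N))‖

/-- Euclidean norm of a vector in ℂ^N. -/
def vnorm {N : ℕ} (x : Fin N → ℂ) : ℝ := Real.sqrt (∑ i, Complex.normSq (x i))

/-- The sesquilinear form `⟨x, M y⟩`. -/
def bil {N : ℕ} (x : Fin N → ℂ) (M : Matrix (Fin N) (Fin N) ℂ) (y : Fin N → ℂ) : ℂ :=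
  ∑ i, (starRingEnd ℂ) (x i) * M.mulVec y i

/-- `π` is a partition of the finite set `S ⊆ ℕ`, encoded as a finite set of blocks. -/
def IsPartition (S : Finset ℕ) (π : Finset (Finset ℕ)) : Prop :=
  (∀ B ∈ π, B.Nonempty) ∧ (∀ B ∈ π, B ⊆ S) ∧
    (∀ x ∈ S, ∃! B : Finset ℕ, B ∈ π ∧ x ∈ B)

/-- A family of blocks is crossing if there are `a < c < b < d` with `a,b` in a block and
`c,d` in a different block. -/
def Crossing (π : Finset (Finset ℕ)) : Prop :=
  ∃ B ∈ π, ∃ B' ∈ π, B ≠ B' ∧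
    ∃ a ∈ B, ∃ b ∈ B, ∃ c ∈ B', ∃ d ∈ B', a < c ∧ c < b ∧ b < d

/-- The set `NCP(S)` of non-crossing partitions of `S`. -/
def NCP (S : Finset ℕ) : Finset (Finset (Finset ℕ)) :=
  S.powerset.powerset.filter fun π => IsPartition S π ∧ ¬ Crossing π

/-- Refinement order on partitions: every block of `π` is contained in a block of `σ`. -/
def Refines (π σ : Finset (Finset ℕ)) : Prop := ∀ B ∈ π, ∃ B' ∈ σ, B ⊆ B'

/-- The interleaving of a partition `π` of `S` (placed on the even integers `2s`, `s ∈ S`) with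
a partition `σ` of the copy of `S` placed on the odd integers `2s+1`, `s ∈ S`. -/
def interleaved (π σ : Finset (Finset ℕ)) : Finset (Finset ℕ) :=
  π.image (fun B => B.image fun x => 2 * x) ∪ σ.image (fun B => B.image fun x => 2 * x + 1)

/-- `σ` is the Kreweras complement of `π ∈ NCP(S)`: it is the maximal (in refinement order)
non-crossing partition of (a copy of) `S` such that the interleaved union `π ∪ σ̄` is
non-crossing. -/
def IsKreweras (S : Finset ℕ) (π σ : Finset (Finset ℕ)) : Prop :=
  σ ∈ NCP S ∧ ¬ Crossing (interleaved π σ) ∧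
    ∀ σ' ∈ NCP S, ¬ Crossing (interleaved π σ') → Refines σ' σ

/-- The product `∏_{j ∈ B} A j`, ordered by increasing index. -/
def ordProd {N : ℕ} (B : Finset ℕ) (A : ℕ → Matrix (Fin N) (Fin N) ℂ) :
    Matrix (Fin N) (Fin N) ℂ :=
  ((B.sort (· ≤ ·)).map A).prod

/-- `⟨A₁,…⟩_π := ∏_{B∈π} ⟨∏_{j∈B} A_j⟩` (each product ordered by increasing index). -/
def piTrace {N : ℕ} (π : Finset (Finset ℕ)) (A : ℕ → Matrix (Fin N) (Fin N) ℂ) : ℂ :=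
  ∏ B ∈ π, ntr (ordProd B A)

/-- The `π`-partial-trace `pTr_π(A₁,…)`, where `s` is the distinguished (maximal) element of the
ground set: `(∏_{j∈B(s), j≠s} A_j) ∏_{B∈π, s∉B} ⟨∏_{j∈B} A_j⟩`. -/
def pTr {N : ℕ} (s : ℕ) (π : Finset (Finset ℕ)) (A : ℕ → Matrix (Fin N) (Fin N) ℂ) :
    Matrix (Fin N) (Fin N) ℂ :=
  (∏ B ∈ π.filter (fun B => s ∉ B), ntr (ordProd B A)) •
    ordProd (((π.filter fun B => s ∈ B).sup id).erase s) A

/-- `fmax k g = max_{1 ≤ i ≤ k} g i` (0 if `k = 0`). -/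
def fmax (k : ℕ) (g : ℕ → ℝ) : ℝ :=
  if h : (Finset.Icc 1 k).Nonempty then (Finset.Icc 1 k).sup' h g else 0

/-- `fmin k g = min_{1 ≤ i ≤ k} g i` (0 if `k = 0`). -/
def fmin (k : ℕ) (g : ℕ → ℝ) : ℝ :=
  if h : (Finset.Icc 1 k).Nonempty then (Finset.Icc 1 k).inf' h g else 0

/-- `fmax2 k g = max_{1 ≤ i ≠ j ≤ k} g i j`. -/
def fmax2 (k : ℕ) (g : ℕ → ℕ → ℝ) : ℝ :=
  if h : ((Finset.Icc 1 k).offDiag).Nonempty then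
    ((Finset.Icc 1 k).offDiag).sup' h (fun p => g p.1 p.2) else 0

/-- A Wigner matrix: random Hermitian `N×N` matrix with independent entries (up to Hermitian
symmetry), identically distributed off-diagonal entries of mean zero and variance `1/N` with
`E w_{ab}² ∈ ℝ`, identically distributed real diagonal entries of mean zero, and all `p`-th
moments of the normalized entries bounded by `Cmom p`. -/
structure IsWigner {Ω : Type} [MeasurableSpace Ω] (P : Measure Ω) (N : ℕ)
    (W : Ω → Matrix (Fin N) (Fin N) ℂ) (Cmom : ℕ → ℝ) : Prop where
  herm : ∀ ω, (W ω).IsHermitian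
  meas : ∀ a b, Measurable fun ω => W ω a b
  indep : iIndepFun
    (fun (p : {p : Fin N × Fin N // p.1 ≤ p.2}) (ω : Ω) => W ω p.1.1 p.1.2) P
  identOff : ∀ a b a' b' : Fin N, a < b → a' < b' →
    IdentDistrib (fun ω => W ω a b) (fun ω => W ω a' b') P P
  identDiag : ∀ a a' : Fin N,
    IdentDistrib (fun ω => W ω a a) (fun ω => W ω a' a') P P
  diagReal : ∀ ω a, (W ω a a).im = 0
  mean_zero : ∀ a b, ∫ ω, W ω a b ∂P = 0
  variance_one : ∀ a b : Fin N, a < b → ∫ ω, Complex.normSq (W ω a b) ∂P = (N : ℝ)⁻¹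
  second_real : ∀ a b : Fin N, a < b → (∫ ω, (W ω a b) ^ 2 ∂P).im = 0
  moments : ∀ p : ℕ, ∀ a b, ∫ ω, ‖W ω a b‖ ^ p ∂P ≤ Cmom p * (N : ℝ) ^ (-(p : ℝ) / 2)

/-- `f(W)` for a Hermitian matrix `W`, via the spectral theorem. -/
def matFun {N : ℕ} (f : ℝ → ℂ) (W : Matrix (Fin N) (Fin N) ℂ) : Matrix (Fin N) (Fin N) ℂ :=
  if hW : W.IsHermitian then
    (hW.eigenvectorUnitary : Matrix (Fin N) (Fin N) ℂ) *
      Matrix.diagonal (fun i => f (hW.eigenvalues i)) *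
      star (hW.eigenvectorUnitary : Matrix (Fin N) (Fin N) ℂ)
  else 0

/-- The matrix exponential `e^{isW}`. -/
def uexp {N : ℕ} (s : ℝ) (W : Matrix (Fin N) (Fin N) ℂ) : Matrix (Fin N) (Fin N) ℂ :=
  NormedSpace.exp ((Complex.I * (s : ℂ)) • W)

/-- Heisenberg time evolution `A(t) = e^{itW} A e^{-itW}`. -/
def heis {N : ℕ} (t : ℝ) (W A : Matrix (Fin N) (Fin N) ℂ) : Matrix (Fin N) (Fin N) ℂ :=
  uexp t W * A * uexp (-t) W

/-- The semicircle density `ρ_sc(x) = √(4-x²)/(2π)`. -/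
def rhoSC (x : ℝ) : ℝ := Real.sqrt (4 - x ^ 2) / (2 * Real.pi)

/-- The semicircle average `⟨g⟩_sc = ∫_{-2}^2 g(x) ρ_sc(x) dx`. -/
def scInt (g : ℝ → ℂ) : ℂ := ∫ x in (-2 : ℝ)..2, (rhoSC x : ℂ) * g x

/-- The Stieltjes transform of the semicircle law. -/
def mSC (z : ℂ) : ℂ := ∫ x in (-2 : ℝ)..2, (rhoSC x : ℂ) / ((x : ℂ) - z)

/-- `φ(s) = ∫_{-2}^2 ρ_sc(x) e^{isx} dx`. -/
def phiSC (s : ℝ) : ℂ := ∫ x in (-2 : ℝ)..2, (rhoSC x : ℂ) * Complex.exp (Complex.I * s * x)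

/-- `g` is a weak derivative of `f` on `ℝ`. -/
def IsWeakDeriv (f g : ℝ → ℂ) : Prop :=
  ∀ φ : ℝ → ℂ, ContDiff ℝ (⊤ : ℕ∞) φ → HasCompactSupport φ →
    ∫ x, f x * deriv φ x = - ∫ x, g x * φ x

/-- `f ∈ H^k(ℝ)`, witnessed by the family `d` of its weak derivatives (`d j` is the `j`-th
weak derivative, `d 0 = f`, all in `L²`). -/
structure InSobolev (k : ℕ) (f : ℝ → ℂ) (d : ℕ → ℝ → ℂ) : Prop where
  d0 : d 0 = f
  wd : ∀ j < k, IsWeakDeriv (d j) (d (j + 1))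
  l2 : ∀ j ≤ k, MemLp (d j) 2 volume

/-- The Sobolev norm `‖f‖_{H^k}` computed from the family of weak derivatives of `f`. -/
def sobNorm (k : ℕ) (d : ℕ → ℝ → ℂ) : ℝ :=
  Real.sqrt (∑ j ∈ Finset.range (k + 1), ((eLpNorm (d j) 2 volume).toReal) ^ 2)

/-- `dd` is the divided-difference functional of `g : ℂ → ℂ`, as a symmetric function of a
multiset of base points: characterized by the value `g z` on singletons, the standard recursion
when two of the points differ, and the derivative formula at coinciding points. -/
def IsDivDiff (g : ℂ → ℂ) (dd : Multiset ℂ → ℂ) : Prop :=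
  (∀ z : ℂ, dd {z} = g z) ∧
  (∀ (z₁ zn : ℂ) (s : Multiset ℂ), z₁ ≠ zn →
      dd (z₁ ::ₘ zn ::ₘ s) = (dd (zn ::ₘ s) - dd (z₁ ::ₘ s)) / (zn - z₁)) ∧
  (∀ n : ℕ, 1 ≤ n → ∀ z : ℂ,
      dd (Multiset.replicate n z) = iteratedDeriv (n - 1) g z / (Nat.factorial (n - 1)))

/-- graphs on `S`: a set of edges `(a,b)`, `a < b`, with endpoints in `S`. -/
def GraphsOn (S : Finset ℕ) : Finset (Finset (ℕ × ℕ)) :=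
  ((S ×ˢ S).filter fun p => p.1 < p.2).powerset

/-- Two edges cross if `a < c < b < d`. -/
def GraphCrossing (E : Finset (ℕ × ℕ)) : Prop :=
  ∃ e ∈ E, ∃ e' ∈ E, e.1 < e'.1 ∧ e'.1 < e.2 ∧ e.2 < e'.2

/-- The set `NCG(S)` of non-crossing graphs on vertex set `S`. -/
def NCG (S : Finset ℕ) : Finset (Finset (ℕ × ℕ)) :=
  (GraphsOn S).filter fun E => ¬ GraphCrossing E

/-- The graph `E` is connected on the vertex set `S`. -/
def GraphConnected (S : Finset ℕ) (E : Finset (ℕ × ℕ)) : Prop :=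
  ∀ x ∈ S, ∀ y ∈ S, Relation.ReflTransGen (fun a b => (a, b) ∈ E ∨ (b, a) ∈ E) x y

/-- The set `NCG_c(S)` of connected non-crossing graphs on vertex set `S`. -/
def NCGc (S : Finset ℕ) : Finset (Finset (ℕ × ℕ)) :=
  (NCG S).filter fun E => GraphConnected S E

/-- `q_{ab} = m_a m_b / (1 - m_a m_b)`. -/
def qq (m1 m2 : ℂ) : ℂ := m1 * m2 / (1 - m1 * m2)



section Statement19Aux

open MeasureTheory intervalIntegral Metric

private lemma rho_cont : Continuous rhoSC :=
  (Real.continuous_sqrt.comp (continuous_const.sub (continuous_pow 2))).div_const _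

private lemma rho_nonneg (x : ℝ) : 0 ≤ rhoSC x :=
  div_nonneg (Real.sqrt_nonneg _) (by positivity)

private lemma sub_ne (x : ℝ) {w : ℂ} (hw : w.im ≠ 0) : (x : ℂ) - w ≠ 0 := by
  intro h; apply hw; have := congrArg Complex.im h; simpa using this

/-- integral representation of divided differences of `mSC` -/
private def Fm (s : Multiset ℂ) : ℂ :=
  ∫ x in (-2 : ℝ)..2, (rhoSC x : ℂ) * (s.map fun w => ((x : ℂ) - w)⁻¹).prod

private lemma cont_integrand {s : Multiset ℂ} (hs : ∀ w ∈ s, w.im ≠ 0) :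
    Continuous fun x : ℝ => (rhoSC x : ℂ) * (s.map fun w => ((x : ℂ) - w)⁻¹).prod := by
  refine (Complex.continuous_ofReal.comp rho_cont).mul ?_
  refine continuous_multiset_prod _ fun w hw => ?_
  exact (Complex.continuous_ofReal.sub continuous_const).inv₀ fun x => sub_ne x (hs w hw)

private lemma Fm_singleton (z : ℂ) : Fm {z} = mSC z := by
  unfold Fm mSC
  simp [div_eq_mul_inv]

private lemma Fm_rec {a b : ℂ} {t : Multiset ℂ} (hab : a ≠ b)
    (ha : a.im ≠ 0) (hb : b.im ≠ 0) (ht : ∀ w ∈ t, w.im ≠ 0) :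
    Fm (a ::ₘ b ::ₘ t) = (Fm (b ::ₘ t) - Fm (a ::ₘ t)) / (b - a) := by
  have hIb : IntervalIntegrable
      (fun x : ℝ => (rhoSC x : ℂ) * ((b ::ₘ t).map fun w => ((x : ℂ) - w)⁻¹).prod)
      volume (-2) 2 := by
    refine (cont_integrand ?_).intervalIntegrable _ _
    intro w hw; rcases Multiset.mem_cons.mp hw with h | h
    · exact h ▸ hb
    · exact ht w h
  have hIa : IntervalIntegrable
      (fun x : ℝ => (rhoSC x : ℂ) * ((a ::ₘ t).map fun w => ((x : ℂ) - w)⁻¹).prod)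
      volume (-2) 2 := by
    refine (cont_integrand ?_).intervalIntegrable _ _
    intro w hw; rcases Multiset.mem_cons.mp hw with h | h
    · exact h ▸ ha
    · exact ht w h
  unfold Fm
  rw [← intervalIntegral.integral_sub hIb hIa, ← intervalIntegral.integral_div]
  refine intervalIntegral.integral_congr fun x hx => ?_
  have h1 : (x : ℂ) - a ≠ 0 := sub_ne x ha
  have h2 : (x : ℂ) - b ≠ 0 := sub_ne x hb
  have h3 : b - a ≠ 0 := sub_ne_zero.mpr (Ne.symm hab)
  have hP : ((t.map fun w => (x : ℂ) - w)).prod ≠ 0 := by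
    refine Multiset.prod_ne_zero fun h0 => ?_
    obtain ⟨w, hw, hw0⟩ := Multiset.mem_map.mp h0
    exact sub_ne x (ht w hw) hw0
  simp only [Multiset.map_cons, Multiset.prod_cons]
  field_simp
  ring

private def G (n : ℕ) (z : ℂ) : ℂ :=
  ∫ x in (-2 : ℝ)..2, (rhoSC x : ℂ) * ((x : ℂ) - z)⁻¹ ^ n

private lemma Fm_replicate (n : ℕ) (z : ℂ) : Fm (Multiset.replicate n z) = G n z := by
  unfold Fm G
  simp [Multiset.map_replicate, Multiset.prod_replicate]

private lemma mSC_eq_G1 (z : ℂ) : mSC z = G 1 z := by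
  unfold mSC G; simp [div_eq_mul_inv]

private lemma hasDerivAt_G (n : ℕ) (hn : 1 ≤ n) {z : ℂ} (hz : z.im ≠ 0) :
    HasDerivAt (fun w => G n w) ((n : ℂ) * G (n + 1) z) z := by
  obtain ⟨m, rfl⟩ : ∃ m, n = m + 1 := ⟨n - 1, (Nat.succ_pred_eq_of_pos hn).symm⟩
  set ε : ℝ := |z.im| / 2 with hεdef
  have hεpos : 0 < ε := by
    have : 0 < |z.im| := abs_pos.mpr hz
    positivity
  have key : ∀ w ∈ ball z ε, ∀ x : ℝ, ε ≤ ‖(x : ℂ) - w‖ := by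
    intro w hw x
    have h2 : ‖z - w‖ < ε := by
      have := mem_ball.mp hw
      rw [dist_eq_norm] at this
      calc ‖z - w‖ = ‖w - z‖ := by rw [norm_sub_rev]
        _ < ε := this
    have h1 : |z.im - w.im| ≤ ‖z - w‖ := by
      have := Complex.abs_im_le_norm (z - w)
      simpa [Complex.sub_im] using this
    have h3 : |z.im| - |w.im| ≤ |z.im - w.im| := abs_sub_abs_le_abs_sub _ _
    have h4 : ε ≤ |w.im| := by
      rw [hεdef] at *
      linarith
    have h5 : |((x : ℂ) - w).im| = |w.im| := by
      simp [Complex.sub_im]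
    calc ε ≤ |w.im| := h4
      _ = |((x : ℂ) - w).im| := h5.symm
      _ ≤ ‖(x : ℂ) - w‖ := Complex.abs_im_le_norm _
  have hmeas : ∀ w : ℂ, AEStronglyMeasurable
      (fun t : ℝ => (rhoSC t : ℂ) * ((t : ℂ) - w)⁻¹ ^ (m + 1)) (volume.restrict (Set.uIoc (-2 : ℝ) 2)) := by
    intro w
    exact ((Complex.measurable_ofReal.comp rho_cont.measurable).mul
      (((Complex.measurable_ofReal.sub measurable_const).inv).pow measurable_const)).aestronglyMeasurable
  have hmeas' : AEStronglyMeasurable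
      (fun t : ℝ => (rhoSC t : ℂ) * (((m : ℂ) + 1) * ((t : ℂ) - z)⁻¹ ^ (m + 2)))
      (volume.restrict (Set.uIoc (-2 : ℝ) 2)) := by
    exact ((Complex.measurable_ofReal.comp rho_cont.measurable).mul
      (measurable_const.mul
        (((Complex.measurable_ofReal.sub measurable_const).inv).pow measurable_const))).aestronglyMeasurable
  have hint : IntervalIntegrable (fun t : ℝ => (rhoSC t : ℂ) * ((t : ℂ) - z)⁻¹ ^ (m + 1))
      volume (-2) 2 := by
    refine Continuous.intervalIntegrable ?_ _ _
    exact (Complex.continuous_ofReal.comp rho_cont).mul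
      (((Complex.continuous_ofReal.sub continuous_const).inv₀ fun x => sub_ne x hz).pow _)
  have hboundint : IntervalIntegrable
      (fun t : ℝ => rhoSC t * ((m + 1) * (ε⁻¹) ^ (m + 2))) volume (-2) 2 :=
    (rho_cont.mul continuous_const).intervalIntegrable _ _
  have hdd := intervalIntegral.hasDerivAt_integral_of_dominated_loc_of_deriv_le
    (F := fun w t => (rhoSC t : ℂ) * ((t : ℂ) - w)⁻¹ ^ (m + 1))
    (F' := fun w t => (rhoSC t : ℂ) * (((m : ℂ) + 1) * ((t : ℂ) - w)⁻¹ ^ (m + 2)))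
    (x₀ := z) (a := (-2 : ℝ)) (b := 2) (μ := volume)
    (bound := fun t => rhoSC t * ((m + 1) * (ε⁻¹) ^ (m + 2)))
    (ball_mem_nhds z hεpos) (Filter.Eventually.of_forall hmeas) hint hmeas' ?_ hboundint ?_
  · have : (∫ t in (-2 : ℝ)..2, (rhoSC t : ℂ) * (((m : ℂ) + 1) * ((t : ℂ) - z)⁻¹ ^ (m + 2)))
        = ((m : ℂ) + 1) * G (m + 2) z := by
      rw [G, ← intervalIntegral.integral_const_mul]
      refine intervalIntegral.integral_congr fun x hx => by ring
    rw [this] at hdd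
    have := hdd.2
    have hcast : ((m : ℂ) + 1) = ((m + 1 : ℕ) : ℂ) := by push_cast; ring
    rw [hcast] at this
    exact this
  · -- bound
    refine Filter.Eventually.of_forall fun t ht w hw => ?_
    have hεle : ε ≤ ‖(t : ℂ) - w‖ := key w hw t
    have hpos : (0:ℝ) < ‖(t : ℂ) - w‖ := lt_of_lt_of_le hεpos hεle
    have hinv : ‖(t : ℂ) - w‖⁻¹ ≤ ε⁻¹ := inv_anti₀ hεpos hεle
    have hρ : 0 ≤ rhoSC t := div_nonneg (Real.sqrt_nonneg _) (by positivity)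
    have hnm : ‖((m : ℂ) + 1)‖ = (m : ℝ) + 1 := by
      have hc : ((m : ℂ) + 1) = ((m + 1 : ℕ) : ℂ) := by push_cast; ring
      rw [hc, Complex.norm_natCast]; push_cast; ring
    have h1 : ‖(rhoSC t : ℂ) * (((m : ℂ) + 1) * ((t : ℂ) - w)⁻¹ ^ (m + 2))‖
        = rhoSC t * (((m : ℝ) + 1) * (‖(t : ℂ) - w‖⁻¹) ^ (m + 2)) := by
      rw [norm_mul, norm_mul, norm_pow, norm_inv, Complex.norm_real, hnm,
        Real.norm_eq_abs, abs_of_nonneg hρ]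
    rw [h1]
    have hple : (‖(t : ℂ) - w‖⁻¹) ^ (m + 2) ≤ (ε⁻¹) ^ (m + 2) :=
      pow_le_pow_left₀ (inv_nonneg.mpr hpos.le) hinv _
    have hm1 : (0:ℝ) ≤ (m : ℝ) + 1 := by positivity
    nlinarith [mul_le_mul_of_nonneg_left hple hm1]
  · -- differentiability
    refine Filter.Eventually.of_forall fun t ht w hw => ?_
    have hne : (t : ℂ) - w ≠ 0 := by
      have := lt_of_lt_of_le hεpos (key w hw t)
      exact fun h => by simp [h] at this
    have h1 : HasDerivAt (fun w : ℂ => (t : ℂ) - w) (-1) w := by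
      simpa using (hasDerivAt_id w).const_sub ((t : ℂ))
    have h2 := h1.inv hne
    have h3 := h2.pow (m + 1)
    have h4 := h3.const_mul ((rhoSC t : ℂ))
    refine h4.congr_deriv ?_
    rw [Nat.add_sub_cancel, neg_neg, div_eq_mul_inv, one_mul, ← inv_pow]
    simp only [Pi.inv_apply]
    push_cast
    ring

private lemma iteratedDeriv_mSC (m : ℕ) : ∀ {z : ℂ}, z.im ≠ 0 →
    iteratedDeriv m mSC z = (Nat.factorial m : ℂ) * G (m + 1) z := by
  induction m with
  | zero => intro z hz; simpa [iteratedDeriv_zero] using mSC_eq_G1 z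
  | succ m ih =>
    intro z hz
    rw [iteratedDeriv_succ]
    have hopen : IsOpen {w : ℂ | w.im ≠ 0} := isOpen_ne.preimage Complex.continuous_im
    have hev : iteratedDeriv m mSC =ᶠ[nhds z] fun w => ((Nat.factorial m : ℂ)) * G (m + 1) w := by
      filter_upwards [hopen.mem_nhds hz] with w hw using ih hw
    rw [hev.deriv_eq]
    rw [((hasDerivAt_G (m + 1) (by omega) hz).const_mul ((Nat.factorial m : ℂ))).deriv]
    rw [Nat.factorial_succ]
    push_cast
    ring

private lemma dd_eq_Fm {dd : Multiset ℂ → ℂ} (hdd : IsDivDiff mSC dd) :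
    ∀ n : ℕ, ∀ s : Multiset ℂ, Multiset.card s = n → s ≠ 0 → (∀ w ∈ s, w.im ≠ 0) →
      dd s = Fm s := by
  intro n
  induction n using Nat.strong_induction_on with
  | _ n IH =>
    intro s hcard hs0 him
    by_cases hall : ∀ a ∈ s, ∀ b ∈ s, a = b
    · obtain ⟨c, hc⟩ := Multiset.exists_mem_of_ne_zero hs0
      have hrep : s = Multiset.replicate (Multiset.card s) c :=
        Multiset.eq_replicate_card.mpr fun b hb => hall b hb c hc
      have hn1 : 1 ≤ Multiset.card s := Multiset.card_pos.mpr hs0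
      have hsp : Multiset.card s - 1 + 1 = Multiset.card s := by omega
      rw [hrep, hdd.2.2 _ hn1 c, Fm_replicate,
        iteratedDeriv_mSC (Multiset.card s - 1) (him c hc), hsp]
      have hf : ((Multiset.card s - 1).factorial : ℂ) ≠ 0 :=
        Nat.cast_ne_zero.mpr (Nat.factorial_ne_zero _)
      field_simp
    · push_neg at hall
      obtain ⟨a, ha, b, hb, hab⟩ := hall
      have hb' : b ∈ s.erase a := (Multiset.mem_erase_of_ne (Ne.symm hab)).mpr hb
      have hs : s = a ::ₘ b ::ₘ (s.erase a).erase b := by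
        rw [Multiset.cons_erase hb', Multiset.cons_erase ha]
      set t := (s.erase a).erase b with htd
      have htsub : ∀ w ∈ t, w ∈ s := fun w hw =>
        Multiset.mem_of_le (Multiset.erase_le a s) (Multiset.mem_of_le (Multiset.erase_le b _) hw)
      have hcardt : Multiset.card t + 2 = n := by
        have := congrArg Multiset.card hs
        simp only [Multiset.card_cons] at this
        omega
      have himb : ∀ w ∈ b ::ₘ t, w.im ≠ 0 := by
        intro w hw; rcases Multiset.mem_cons.mp hw with h | h
        · exact h ▸ him b hb
        · exact him w (htsub w h)
      have hima : ∀ w ∈ a ::ₘ t, w.im ≠ 0 := by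
        intro w hw; rcases Multiset.mem_cons.mp hw with h | h
        · exact h ▸ him a ha
        · exact him w (htsub w h)
      have h1 : dd (b ::ₘ t) = Fm (b ::ₘ t) :=
        IH (Multiset.card t + 1) (by omega) _ (by simp) (Multiset.cons_ne_zero) himb
      have h2 : dd (a ::ₘ t) = Fm (a ::ₘ t) :=
        IH (Multiset.card t + 1) (by omega) _ (by simp) (Multiset.cons_ne_zero) hima
      rw [hs, hdd.2.1 a b t hab, h1, h2,
        Fm_rec hab (him a ha) (him b hb) fun w hw => him w (htsub w hw)]

private lemma norm_prod_multiset (s : Multiset ℂ) :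
    ‖s.prod‖ = (s.map fun w => ‖w‖).prod := by
  induction s using Multiset.induction with
  | empty => simp
  | cons a t ih => simp [ih]

private lemma multiset_prod_le {s : Multiset ℝ} {c : ℝ} (hc : 0 ≤ c)
    (h0 : ∀ a ∈ s, 0 ≤ a) (h : ∀ a ∈ s, a ≤ c) :
    s.prod ≤ c ^ Multiset.card s := by
  induction s using Multiset.induction with
  | empty => simp
  | cons a t ih =>
    simp only [Multiset.prod_cons, Multiset.card_cons]
    have ht0 : 0 ≤ t.prod := Multiset.prod_nonneg fun x hx => h0 x (Multiset.mem_cons_of_mem hx)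
    calc a * t.prod ≤ c * c ^ Multiset.card t := by
          refine mul_le_mul (h a (Multiset.mem_cons_self a t)) ?_ ht0 hc
          exact ih (fun x hx => h0 x (Multiset.mem_cons_of_mem hx))
            (fun x hx => h x (Multiset.mem_cons_of_mem hx))
      _ = c ^ (Multiset.card t + 1) := by rw [pow_succ]; ring

private lemma J_cont {z : ℂ} (hz : z.im ≠ 0) :
    Continuous fun x : ℝ => rhoSC x / Complex.normSq ((x : ℂ) - z) := by
  refine rho_cont.div ?_ fun x => (Complex.normSq_pos.mpr (sub_ne x hz)).ne'
  exact Complex.continuous_normSq.comp (Complex.continuous_ofReal.sub continuous_const)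

private lemma J_nonneg (z : ℂ) :
    0 ≤ ∫ x in (-2 : ℝ)..2, rhoSC x / Complex.normSq ((x : ℂ) - z) := by
  refine intervalIntegral.integral_nonneg (by norm_num) fun x hx => ?_
  exact div_nonneg (rho_nonneg x) (Complex.normSq_nonneg _)

private lemma im_mSC {z : ℂ} (hz : z.im ≠ 0) :
    (mSC z).im = z.im * ∫ x in (-2 : ℝ)..2, rhoSC x / Complex.normSq ((x : ℂ) - z) := by
  have hint : IntervalIntegrable (fun x : ℝ => (rhoSC x : ℂ) / ((x : ℂ) - z)) volume (-2) 2 := by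
    refine Continuous.intervalIntegrable ?_ _ _
    exact (Complex.continuous_ofReal.comp rho_cont).div
      (Complex.continuous_ofReal.sub continuous_const) fun x => sub_ne x hz
  have h1 : (mSC z).im = ∫ x in (-2 : ℝ)..2, ((rhoSC x : ℂ) / ((x : ℂ) - z)).im := by
    have h := (Complex.imCLM).intervalIntegral_comp_comm hint
    unfold mSC
    simpa [Complex.imCLM_apply] using h.symm
  rw [h1, ← intervalIntegral.integral_const_mul]
  refine intervalIntegral.integral_congr fun x hx => ?_
  rw [Complex.div_im]
  simp only [Complex.ofReal_re, Complex.ofReal_im, Complex.sub_im, Complex.sub_re]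
  field_simp
  ring

private lemma Fm_bound {z1 z2 : ℂ} {t : Multiset ℂ} {η M : ℝ}
    (hη : 0 < η) (h1 : η ≤ |z1.im|) (h2 : η ≤ |z2.im|)
    (ht : ∀ w ∈ t, w.im ≠ 0) (htη : ∀ w ∈ t, η ≤ |w.im|)
    (hM1 : |(mSC z1).im| ≤ M) (hM2 : |(mSC z2).im| ≤ M) :
    ‖Fm (z1 ::ₘ z2 ::ₘ t)‖ ≤ η⁻¹ ^ (Multiset.card t + 1) * M := by
  have hz1 : z1.im ≠ 0 := fun h => by rw [h] at h1; simp at h1; linarith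
  have hz2 : z2.im ≠ 0 := fun h => by rw [h] at h2; simp at h2; linarith
  set J1 : ℝ := ∫ x in (-2 : ℝ)..2, rhoSC x / Complex.normSq ((x : ℂ) - z1) with hJ1
  set J2 : ℝ := ∫ x in (-2 : ℝ)..2, rhoSC x / Complex.normSq ((x : ℂ) - z2) with hJ2
  set g : ℝ → ℝ := fun x => η⁻¹ ^ Multiset.card t *
      (2⁻¹ * (rhoSC x / Complex.normSq ((x : ℂ) - z1) + rhoSC x / Complex.normSq ((x : ℂ) - z2)))
    with hgdef
  have hgint : IntervalIntegrable g volume (-2) 2 := by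
    refine Continuous.intervalIntegrable ?_ _ _
    exact continuous_const.mul (continuous_const.mul ((J_cont hz1).add (J_cont hz2)))
  have hgnonneg : ∀ x : ℝ, 0 ≤ g x := by
    intro x
    have := rho_nonneg x
    have n1 := Complex.normSq_nonneg ((x : ℂ) - z1)
    have n2 := Complex.normSq_nonneg ((x : ℂ) - z2)
    have : (0:ℝ) ≤ rhoSC x / Complex.normSq ((x : ℂ) - z1) := div_nonneg (rho_nonneg x) n1
    have : (0:ℝ) ≤ rhoSC x / Complex.normSq ((x : ℂ) - z2) := div_nonneg (rho_nonneg x) n2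
    positivity
  have hptbound : ∀ x : ℝ,
      ‖(rhoSC x : ℂ) * ((z1 ::ₘ z2 ::ₘ t).map fun w => ((x : ℂ) - w)⁻¹).prod‖ ≤ g x := by
    intro x
    have hn1 : (0:ℝ) < ‖(x : ℂ) - z1‖ := by
      have h := Complex.abs_im_le_norm ((x : ℂ) - z1)
      simp only [Complex.sub_im, Complex.ofReal_im, zero_sub, abs_neg] at h
      calc (0:ℝ) < η := hη
        _ ≤ |z1.im| := h1
        _ ≤ ‖(x : ℂ) - z1‖ := h
    have hn2 : (0:ℝ) < ‖(x : ℂ) - z2‖ := by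
      have h := Complex.abs_im_le_norm ((x : ℂ) - z2)
      simp only [Complex.sub_im, Complex.ofReal_im, zero_sub, abs_neg] at h
      calc (0:ℝ) < η := hη
        _ ≤ |z2.im| := h2
        _ ≤ ‖(x : ℂ) - z2‖ := h
    have hP : ((t.map fun w => ((x : ℂ) - w)⁻¹).map fun w => ‖w‖).prod
        ≤ η⁻¹ ^ Multiset.card t := by
      have := multiset_prod_le (s := (t.map fun w => ((x : ℂ) - w)⁻¹).map fun w => ‖w‖)
        (c := η⁻¹) (inv_nonneg.mpr hη.le) ?_ ?_
      · simpa using this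
      · intro a hha
        simp only [Multiset.mem_map] at hha
        obtain ⟨w, ⟨v, hv, rfl⟩, rfl⟩ := hha
        positivity
      · intro a hha
        simp only [Multiset.mem_map] at hha
        obtain ⟨w, ⟨v, hv, rfl⟩, rfl⟩ := hha
        rw [norm_inv]
        refine inv_anti₀ hη ?_
        have h := Complex.abs_im_le_norm ((x : ℂ) - v)
        simp only [Complex.sub_im, Complex.ofReal_im, zero_sub, abs_neg] at h
        exact le_trans (htη v hv) h
    have hnorm : ‖(rhoSC x : ℂ) * ((z1 ::ₘ z2 ::ₘ t).map fun w => ((x : ℂ) - w)⁻¹).prod‖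
        = rhoSC x * (‖(x : ℂ) - z1‖⁻¹ * (‖(x : ℂ) - z2‖⁻¹ *
          ((t.map fun w => ((x : ℂ) - w)⁻¹).map fun w => ‖w‖).prod)) := by
      rw [norm_mul, norm_prod_multiset, Complex.norm_real, Real.norm_eq_abs,
        abs_of_nonneg (rho_nonneg x)]
      simp [Multiset.map_cons, Multiset.prod_cons]
    rw [hnorm]
    have hamgm : ‖(x : ℂ) - z1‖⁻¹ * ‖(x : ℂ) - z2‖⁻¹ ≤
        2⁻¹ * ((Complex.normSq ((x : ℂ) - z1))⁻¹ + (Complex.normSq ((x : ℂ) - z2))⁻¹) := by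
      have e1 : Complex.normSq ((x : ℂ) - z1) = ‖(x : ℂ) - z1‖ ^ 2 := by
        rw [← Complex.sq_norm]
      have e2 : Complex.normSq ((x : ℂ) - z2) = ‖(x : ℂ) - z2‖ ^ 2 := by
        rw [← Complex.sq_norm]
      rw [e1, e2]
      set u := ‖(x : ℂ) - z1‖⁻¹ with hu
      set v := ‖(x : ℂ) - z2‖⁻¹ with hv
      have e3 : (‖(x : ℂ) - z1‖ ^ 2)⁻¹ = u ^ 2 := by rw [hu, inv_pow]
      have e4 : (‖(x : ℂ) - z2‖ ^ 2)⁻¹ = v ^ 2 := by rw [hv, inv_pow]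
      rw [e3, e4]
      nlinarith [sq_nonneg (u - v)]
    have hρ := rho_nonneg x
    have hPn : 0 ≤ ((t.map fun w => ((x : ℂ) - w)⁻¹).map fun w => ‖w‖).prod := by
      refine Multiset.prod_nonneg fun a hha => ?_
      simp only [Multiset.mem_map] at hha
      obtain ⟨w, ⟨v, hv, rfl⟩, rfl⟩ := hha
      positivity
    calc rhoSC x * (‖(x : ℂ) - z1‖⁻¹ * (‖(x : ℂ) - z2‖⁻¹ *
          ((t.map fun w => ((x : ℂ) - w)⁻¹).map fun w => ‖w‖).prod))
        ≤ rhoSC x * (‖(x : ℂ) - z1‖⁻¹ * (‖(x : ℂ) - z2‖⁻¹ * η⁻¹ ^ Multiset.card t)) := by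
          have h12 : (0:ℝ) ≤ ‖(x : ℂ) - z1‖⁻¹ * ‖(x : ℂ) - z2‖⁻¹ := by positivity
          nlinarith [mul_le_mul_of_nonneg_left hP h12, mul_le_mul_of_nonneg_left
            (mul_le_mul_of_nonneg_left hP h12) hρ]
      _ ≤ g x := by
          rw [hgdef]
          have hb := hamgm
          have hηp : (0:ℝ) ≤ η⁻¹ ^ Multiset.card t := by positivity
          have := mul_le_mul_of_nonneg_left hb (mul_nonneg hρ hηp)
          calc rhoSC x * (‖(x : ℂ) - z1‖⁻¹ * (‖(x : ℂ) - z2‖⁻¹ * η⁻¹ ^ Multiset.card t))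
              = rhoSC x * η⁻¹ ^ Multiset.card t *
                (‖(x : ℂ) - z1‖⁻¹ * ‖(x : ℂ) - z2‖⁻¹) := by ring
            _ ≤ rhoSC x * η⁻¹ ^ Multiset.card t *
                (2⁻¹ * ((Complex.normSq ((x : ℂ) - z1))⁻¹ +
                  (Complex.normSq ((x : ℂ) - z2))⁻¹)) := by
                exact mul_le_mul_of_nonneg_left hamgm (mul_nonneg hρ hηp)
            _ = η⁻¹ ^ Multiset.card t *
                (2⁻¹ * (rhoSC x / Complex.normSq ((x : ℂ) - z1) +
                  rhoSC x / Complex.normSq ((x : ℂ) - z2))) := by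
                field_simp
  have step1 : ‖Fm (z1 ::ₘ z2 ::ₘ t)‖ ≤ |∫ x in (-2 : ℝ)..2, g x| := by
    unfold Fm
    refine intervalIntegral.norm_integral_le_abs_of_norm_le ?_ hgint
    exact Filter.Eventually.of_forall fun x => hptbound x
  have hgig : |∫ x in (-2 : ℝ)..2, g x| = ∫ x in (-2 : ℝ)..2, g x := by
    refine abs_of_nonneg ?_
    exact intervalIntegral.integral_nonneg (by norm_num) fun x hx => hgnonneg x
  have hgval : (∫ x in (-2 : ℝ)..2, g x) = η⁻¹ ^ Multiset.card t * (2⁻¹ * (J1 + J2)) := by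
    rw [hgdef]
    rw [intervalIntegral.integral_const_mul, intervalIntegral.integral_const_mul,
      intervalIntegral.integral_add ((J_cont hz1).intervalIntegrable _ _)
        ((J_cont hz2).intervalIntegrable _ _)]
  have hJb : ∀ (z : ℂ), z.im ≠ 0 → η ≤ |z.im| → |(mSC z).im| ≤ M →
      (∫ x in (-2 : ℝ)..2, rhoSC x / Complex.normSq ((x : ℂ) - z)) ≤ M / η := by
    intro z hz hηz hMz
    have him := im_mSC hz
    have hJn := J_nonneg z
    have habs : |(mSC z).im| = |z.im| * (∫ x in (-2 : ℝ)..2, rhoSC x / Complex.normSq ((x : ℂ) - z)) := by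
      rw [him, abs_mul, abs_of_nonneg hJn]
    rw [le_div_iff₀ hη]
    calc (∫ x in (-2 : ℝ)..2, rhoSC x / Complex.normSq ((x : ℂ) - z)) * η
        ≤ (∫ x in (-2 : ℝ)..2, rhoSC x / Complex.normSq ((x : ℂ) - z)) * |z.im| :=
          mul_le_mul_of_nonneg_left hηz hJn
      _ = |(mSC z).im| := by rw [habs]; ring
      _ ≤ M := hMz
  have hJ1b : J1 ≤ M / η := hJb z1 hz1 h1 hM1
  have hJ2b : J2 ≤ M / η := hJb z2 hz2 h2 hM2
  calc ‖Fm (z1 ::ₘ z2 ::ₘ t)‖ ≤ |∫ x in (-2 : ℝ)..2, g x| := step1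
    _ = η⁻¹ ^ Multiset.card t * (2⁻¹ * (J1 + J2)) := by rw [hgig, hgval]
    _ ≤ η⁻¹ ^ Multiset.card t * (2⁻¹ * (M / η + M / η)) := by
        have hηp : (0:ℝ) ≤ η⁻¹ ^ Multiset.card t := by positivity
        have : J1 + J2 ≤ M / η + M / η := add_le_add hJ1b hJ2b
        nlinarith
    _ = η⁻¹ ^ (Multiset.card t + 1) * M := by
        rw [pow_succ]
        field_simp
        try ring

end Statement19Aux

/-- eq. (4.10): bound on divided differences of the semicircle Stieltjes
transform. -/
theorem statement19
    (k : ℕ) (hk : 2 ≤ k) (z : ℕ → ℂ) (hz : ∀ i ∈ Finset.Icc 1 k, (z i).im ≠ 0)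
    (dd : Multiset ℂ → ℂ) (hdd : IsDivDiff mSC dd) :
    ‖dd ((Finset.Icc 1 k).val.map z)‖ ≤
      (fmin k fun i => |(z i).im|) ^ ((1 : ℤ) - (k : ℤ)) *
        fmax k (fun i => |(mSC (z i)).im|) := by
  have h1k : (1 : ℕ) ∈ Finset.Icc 1 k := by simp [Finset.mem_Icc]; omega
  have h2k : (2 : ℕ) ∈ Finset.Icc 1 k := by simp [Finset.mem_Icc]; omega
  have hne : (Finset.Icc 1 k).Nonempty := ⟨1, h1k⟩
  set η := fmin k fun i => |(z i).im| with hηs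
  set M := fmax k fun i => |(mSC (z i)).im| with hMs
  have hηdef : η = (Finset.Icc 1 k).inf' hne fun i => |(z i).im| := by
    rw [hηs, fmin, dif_pos hne]
  have hMdef : M = (Finset.Icc 1 k).sup' hne fun i => |(mSC (z i)).im| := by
    rw [hMs, fmax, dif_pos hne]
  have hη0 : 0 < η := by
    rw [hηdef]
    rw [Finset.lt_inf'_iff]
    exact fun i hi => abs_pos.mpr (hz i hi)
  have hηle : ∀ i ∈ Finset.Icc 1 k, η ≤ |(z i).im| := fun i hi =>
    hηdef ▸ Finset.inf'_le (fun i => |(z i).im|) hi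
  have hMge : ∀ i ∈ Finset.Icc 1 k, |(mSC (z i)).im| ≤ M := fun i hi =>
    hMdef ▸ Finset.le_sup' (fun i => |(mSC (z i)).im|) hi
  have hset1 : Finset.Icc 1 k = insert 1 (insert 2 (Finset.Icc 3 k)) := by
    ext i; simp [Finset.mem_Icc]; omega
  have hval : (Finset.Icc 1 k).val = 1 ::ₘ 2 ::ₘ (Finset.Icc 3 k).val := by
    rw [hset1, Finset.insert_val_of_notMem (by simp [Finset.mem_Icc]),
      Finset.insert_val_of_notMem (by simp [Finset.mem_Icc])]
  have hmapval : (Finset.Icc 1 k).val.map z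
      = z 1 ::ₘ z 2 ::ₘ (Finset.Icc 3 k).val.map z := by
    rw [hval]; simp
  have hmem3 : ∀ w ∈ (Finset.Icc 3 k).val.map z, ∃ i ∈ Finset.Icc 1 k, z i = w := by
    intro w hw
    obtain ⟨i, hi, rfl⟩ := Multiset.mem_map.mp hw
    have hi' : i ∈ Finset.Icc 3 k := hi
    refine ⟨i, ?_, rfl⟩
    simp only [Finset.mem_Icc] at hi' ⊢
    omega
  have himall : ∀ w ∈ (Finset.Icc 1 k).val.map z, w.im ≠ 0 := by
    intro w hw
    obtain ⟨i, hi, rfl⟩ := Multiset.mem_map.mp hw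
    exact hz i hi
  have hdd_eq : dd ((Finset.Icc 1 k).val.map z) = Fm ((Finset.Icc 1 k).val.map z) := by
    refine dd_eq_Fm hdd (Multiset.card ((Finset.Icc 1 k).val.map z)) _ rfl ?_ himall
    rw [hmapval]
    exact Multiset.cons_ne_zero
  rw [hdd_eq, hmapval]
  have hcard3 : Multiset.card ((Finset.Icc 3 k).val.map z) = k - 2 := by
    rw [Multiset.card_map]
    have : Multiset.card (Finset.Icc 3 k).val = (Finset.Icc 3 k).card := rfl
    rw [this, Nat.card_Icc]
    omega
  have hbound := Fm_bound (z1 := z 1) (z2 := z 2) (t := (Finset.Icc 3 k).val.map z)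
    hη0 (hηle 1 h1k) (hηle 2 h2k)
    (fun w hw => by obtain ⟨i, hi, rfl⟩ := hmem3 w hw; exact hz i hi)
    (fun w hw => by obtain ⟨i, hi, rfl⟩ := hmem3 w hw; exact hηle i hi)
    (hMge 1 h1k) (hMge 2 h2k)
  rw [hcard3] at hbound
  have hexp : η ^ ((1 : ℤ) - (k : ℤ)) = η⁻¹ ^ (k - 2 + 1) := by
    have hcast : ((1 : ℤ) - (k : ℤ)) = -((k - 2 + 1 : ℕ) : ℤ) := by push_cast; omega
    rw [hcast, zpow_neg, zpow_natCast, ← inv_pow]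
  rw [hexp]
  exact hbound

end Paper
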